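/- Let h₁,…,h_k : [0,1]^2 → ℝ be continuous functions. Let p and q be continuous strictly positive copula densities of minimum-information form, i.e., p(x,y) = exp(Σᵢ θᵢ hᵢ(x,y) + a_p(x) + b_p(y)) and q(x,y) = exp(Σᵢ θ'ᵢ hᵢ(x,y) + a_q(x) + b_q(y)) for some parameters θ, θ' ∈ ℝ^k and continuous functions a_p, b_p, a_q, b_q : [0,1] → ℝ, with both p and q satisfying the copula marginal conditions. If S(p,q) = S(p,p) (both finite), then p = q. That is, the conditional KL score is strictly proper relative to the minimum information copula model. -/

import Mathlib

open Set MeasureTheory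

/-- The conditional Kullback–Leibler (CKL) score. -/
noncomputable def condKLScore (q : ℝ → ℝ → ℝ) (x1 y1 x2 y2 : ℝ) : ℝ :=
  -Real.log (q x1 y1 * q x2 y2 / (q x1 y1 * q x2 y2 + q x1 y2 * q x2 y1))

/-- The unit box `[0,1]⁴` in `ℝ × ℝ × ℝ × ℝ`, for `(x¹, y¹, x², y²)`. -/
def unitBox4 : Set (ℝ × ℝ × ℝ × ℝ) :=
  Icc (0:ℝ) 1 ×ˢ (Icc (0:ℝ) 1 ×ˢ (Icc (0:ℝ) 1 ×ˢ Icc (0:ℝ) 1))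

/-- The integrand of the expected conditional KL score
`S(x¹,y¹,x²,y²,q) · p(x¹,y¹) p(x²,y²)`. -/
noncomputable def cklIntegrand (p q : ℝ → ℝ → ℝ) (w : ℝ × ℝ × ℝ × ℝ) : ℝ :=
  condKLScore q w.1 w.2.1 w.2.2.1 w.2.2.2 * (p w.1 w.2.1 * p w.2.2.1 w.2.2.2)

/-- The expected conditional KL score `S(p,q)`. -/
noncomputable def expCondKLScore (p q : ℝ → ℝ → ℝ) : ℝ :=
  ∫ w in unitBox4, cklIntegrand p q w

/-!
Symmetrising the expected score over the exchange `(x¹, y¹, x², y²) ↦ (x¹, y², x², y¹)` writes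
`2 (S(p,q) - S(p,p))` as the integral of a Gibbs gap: the cross entropy of the two-point law
"observed versus exchanged pairing" under `p` relative to the same law under `q`, minus its value
for `q = p`. This gap is continuous and nonnegative, so it vanishes identically, which forces the
odds ratios `p(x,y) p(x',y') / (p(x,y') p(x',y))` of `p` and `q` to agree; hence
`log p - log q = F(x) + G(y)`. As `p` and `q` have the same marginals, `p - q` integrates to zero
against `F(x) + G(y)`, so the nonnegative continuous function `(p - q) (log p - log q)` has
integral zero and vanishes, i.e. `p = q`.
-/

open Real InformationTheory Function unitInterval

section BinaryCrossEntropy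

noncomputable def binaryCrossEntropy (a b c d : ℝ) : ℝ :=
  -(a * log (c / (c + d)) + b * log (d / (c + d)))

variable {a b c d : ℝ}

lemma binaryCrossEntropy_sub_self (ha : 0 < a) (hb : 0 < b) (hc : 0 < c) (hd : 0 < d) :
    binaryCrossEntropy a b c d - binaryCrossEntropy a b a b =
      (a + b) * (c / (c + d) * klFun (a * (c + d) / ((a + b) * c)) +
        d / (c + d) * klFun (b * (c + d) / ((a + b) * d))) := by
  simp only [binaryCrossEntropy, klFun]
  rw [log_div, log_div, log_div, log_div, log_div, log_div, log_mul, log_mul, log_mul, log_mul]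
  · field_simp
    ring
  all_goals positivity

lemma binaryCrossEntropy_self_le (ha : 0 < a) (hb : 0 < b) (hc : 0 < c) (hd : 0 < d) :
    binaryCrossEntropy a b a b ≤ binaryCrossEntropy a b c d := by
  rw [← sub_nonneg, binaryCrossEntropy_sub_self ha hb hc hd]
  exact mul_nonneg (by positivity) <| add_nonneg
    (mul_nonneg (by positivity) (klFun_nonneg (by positivity)))
    (mul_nonneg (by positivity) (klFun_nonneg (by positivity)))

lemma mul_eq_mul_of_binaryCrossEntropy_eq (ha : 0 < a) (hb : 0 < b) (hc : 0 < c) (hd : 0 < d)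
    (h : binaryCrossEntropy a b c d = binaryCrossEntropy a b a b) : a * d = b * c := by
  have h1 : 0 ≤ c / (c + d) * klFun (a * (c + d) / ((a + b) * c)) :=
    mul_nonneg (by positivity) (klFun_nonneg (by positivity))
  have h2 : 0 ≤ d / (c + d) * klFun (b * (c + d) / ((a + b) * d)) :=
    mul_nonneg (by positivity) (klFun_nonneg (by positivity))
  have hsum := binaryCrossEntropy_sub_self ha hb hc hd
  rw [h, sub_self, eq_comm, mul_eq_zero, or_iff_right (by positivity)] at hsum
  have hkl : klFun (a * (c + d) / ((a + b) * c)) = 0 :=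
    (mul_eq_zero.1 ((add_eq_zero_iff_of_nonneg h1 h2).1 hsum).1).resolve_left (by positivity)
  rw [klFun_eq_zero_iff (by positivity), div_eq_one_iff_eq (by positivity)] at hkl
  linarith

end BinaryCrossEntropy

lemma sub_mul_log_sub_log_nonneg {a b : ℝ} (ha : 0 < a) (hb : 0 < b) :
    0 ≤ (a - b) * (log a - log b) := by
  rcases le_total a b with hab | hab
  · exact mul_nonneg_of_nonpos_of_nonpos (by linarith) (by linarith [log_le_log ha hab])
  · exact mul_nonneg (by linarith) (by linarith [log_le_log hb hab])

lemma eq_of_sub_mul_log_sub_log_eq_zero {a b : ℝ} (ha : 0 < a) (hb : 0 < b)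
    (h : (a - b) * (log a - log b) = 0) : a = b := by
  rcases mul_eq_zero.1 h with h | h
  · linarith
  · exact log_injOn_pos ha hb (by linarith)

lemma log_mul_mul_mul {a b c d : ℝ} (ha : 0 < a) (hb : 0 < b) (hc : 0 < c) (hd : 0 < d) :
    log (a * b * (c * d)) = log a + log b + (log c + log d) := by
  rw [log_mul (by positivity) (by positivity), log_mul ha.ne' hb.ne', log_mul hc.ne' hd.ne']

lemma eqOn_zero_of_setIntegral_eq_zero {X : Type*} [TopologicalSpace X] [MeasurableSpace X]
    {μ : Measure X} [μ.IsOpenPosMeasure] {s : Set X} {f : X → ℝ}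
    (hs : MeasurableSet s) (hs_int : s ⊆ closure (interior s)) (hf : ContinuousOn f s)
    (hf_nonneg : ∀ x ∈ s, 0 ≤ f x) (hf_int : IntegrableOn f s μ) (h : ∫ x in s, f x ∂μ = 0) :
    EqOn f 0 s :=
  Measure.eqOn_of_ae_eq
    ((setIntegral_eq_zero_iff_of_nonneg_ae (ae_restrict_of_forall_mem hs hf_nonneg) hf_int).1 h)
    hf continuousOn_const hs_int

lemma prod_subset_closure_interior {X Y : Type*} [TopologicalSpace X] [TopologicalSpace Y]
    {s : Set X} {t : Set Y} (hs : s ⊆ closure (interior s)) (ht : t ⊆ closure (interior t)) :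
    s ×ˢ t ⊆ closure (interior (s ×ˢ t)) := by
  rw [interior_prod_eq, closure_prod_eq]
  exact prod_mono hs ht

lemma unitInterval_subset_closure_interior : I ⊆ closure (interior I) :=
  (closure_interior_Icc zero_ne_one).symm.subset

section Fubini

variable {α β : Type*} [MeasurableSpace α] [MeasurableSpace β] {μ : Measure α} {ν : Measure β}
  [SFinite μ] [SFinite ν] {r : α → β → ℝ} {F : α → ℝ} {G : β → ℝ}

lemma integral_mul_add_eq_zero (hF : Integrable (fun z => r z.1 z.2 * F z.1) (μ.prod ν))
    (hG : Integrable (fun z => r z.1 z.2 * G z.2) (μ.prod ν))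
    (hrow : ∀ᵐ x ∂μ, ∫ y, r x y ∂ν = 0) (hcol : ∀ᵐ y ∂ν, ∫ x, r x y ∂μ = 0) :
    ∫ z, r z.1 z.2 * (F z.1 + G z.2) ∂μ.prod ν = 0 := by
  have hF0 : ∫ z, r z.1 z.2 * F z.1 ∂μ.prod ν = 0 := by
    rw [integral_prod _ hF]
    exact integral_eq_zero_of_ae (hrow.mono fun x hx => by simp [integral_mul_const, hx])
  have hG0 : ∫ z, r z.1 z.2 * G z.2 ∂μ.prod ν = 0 := by
    rw [integral_prod_symm _ hG]
    exact integral_eq_zero_of_ae (hcol.mono fun y hy => by simp [integral_mul_const, hy])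
  simp_rw [mul_add]
  rw [integral_add hF hG, hF0, hG0, add_zero]

end Fubini

lemma measurableSet_unitBox4 : MeasurableSet unitBox4 :=
  measurableSet_Icc.prod (measurableSet_Icc.prod (measurableSet_Icc.prod measurableSet_Icc))

lemma isCompact_unitBox4 : IsCompact unitBox4 :=
  isCompact_Icc.prod (isCompact_Icc.prod (isCompact_Icc.prod isCompact_Icc))

lemma unitBox4_subset_closure_interior : unitBox4 ⊆ closure (interior unitBox4) :=
  prod_subset_closure_interior unitInterval_subset_closure_interior <|
    prod_subset_closure_interior unitInterval_subset_closure_interior <|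
      prod_subset_closure_interior unitInterval_subset_closure_interior
        unitInterval_subset_closure_interior

section SwapY

/-- `(x¹, y¹, x², y²) ↦ (x¹, y², x², y¹)`. -/
def swapY : (ℝ × ℝ × ℝ × ℝ) ≃ᵐ (ℝ × ℝ × ℝ × ℝ) :=
  (MeasurableEquiv.refl ℝ).prodCongr <| MeasurableEquiv.prodAssoc.symm.trans <|
    MeasurableEquiv.prodComm.trans <| (MeasurableEquiv.refl ℝ).prodCongr MeasurableEquiv.prodComm

@[simp]
lemma swapY_apply (w : ℝ × ℝ × ℝ × ℝ) : swapY w = (w.1, w.2.2.2, w.2.2.1, w.2.1) := rfl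

lemma measurePreserving_swapY : MeasurePreserving swapY volume volume := by
  have hassoc : MeasurePreserving (MeasurableEquiv.prodAssoc (α := ℝ) (β := ℝ) (γ := ℝ)).symm
      volume volume :=
    volume_preserving_prodAssoc.symm _
  exact (MeasurePreserving.id volume).prod <|
    ((MeasurePreserving.id volume).prod Measure.measurePreserving_swap).comp
      (Measure.measurePreserving_swap.comp hassoc)

lemma continuous_swapY : Continuous swapY :=
  show Continuous fun w : ℝ × ℝ × ℝ × ℝ => (w.1, w.2.2.2, w.2.2.1, w.2.1) by fun_prop

lemma swapY_preimage_unitBox4 : swapY ⁻¹' unitBox4 = unitBox4 := by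
  ext w
  simp only [unitBox4, mem_preimage, swapY_apply, mem_prod]
  tauto

lemma mapsTo_swapY_unitBox4 : MapsTo swapY unitBox4 unitBox4 := fun w hw => by
  rwa [← swapY_preimage_unitBox4] at hw

lemma IntegrableOn.comp_swapY {f : ℝ × ℝ × ℝ × ℝ → ℝ} (hf : IntegrableOn f unitBox4) :
    IntegrableOn (fun w => f (swapY w)) unitBox4 := by
  simpa only [swapY_preimage_unitBox4, Function.comp_def] using
    (measurePreserving_swapY.integrableOn_comp_preimage swapY.measurableEmbedding).2 hf

lemma setIntegral_unitBox4_comp_swapY (f : ℝ × ℝ × ℝ × ℝ → ℝ) :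
    ∫ w in unitBox4, f (swapY w) = ∫ w in unitBox4, f w := by
  simpa only [swapY_preimage_unitBox4] using
    measurePreserving_swapY.setIntegral_preimage_emb swapY.measurableEmbedding f unitBox4

lemma setIntegral_add_comp_swapY {f : ℝ × ℝ × ℝ × ℝ → ℝ} (hf : IntegrableOn f unitBox4) :
    ∫ w in unitBox4, (f w + f (swapY w)) = 2 * ∫ w in unitBox4, f w := by
  rw [integral_add hf (IntegrableOn.comp_swapY hf), setIntegral_unitBox4_comp_swapY, two_mul]

end SwapY

def pairProd (r : ℝ → ℝ → ℝ) (w : ℝ × ℝ × ℝ × ℝ) : ℝ := r w.1 w.2.1 * r w.2.2.1 w.2.2.2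

lemma cklIntegrand_add_comp_swapY (p q : ℝ → ℝ → ℝ) (w : ℝ × ℝ × ℝ × ℝ) :
    cklIntegrand p q w + cklIntegrand p q (swapY w) =
      binaryCrossEntropy (pairProd p w) (pairProd p (swapY w)) (pairProd q w)
        (pairProd q (swapY w)) := by
  simp only [cklIntegrand, condKLScore, binaryCrossEntropy, pairProd, swapY_apply]
  ring_nf

section Model

variable {p q : ℝ → ℝ → ℝ}

lemma pairProd_pos (hp_pos : ∀ x ∈ I, ∀ y ∈ I, 0 < p x y) {w : ℝ × ℝ × ℝ × ℝ}
    (hw : w ∈ unitBox4) : 0 < pairProd p w :=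
  mul_pos (hp_pos _ hw.1 _ hw.2.1) (hp_pos _ hw.2.2.1 _ hw.2.2.2)

lemma continuousOn_pairProd (hp : ContinuousOn (uncurry p) (I ×ˢ I)) :
    ContinuousOn (pairProd p) unitBox4 :=
  (hp.comp (by fun_prop : Continuous fun w : ℝ × ℝ × ℝ × ℝ => (w.1, w.2.1)).continuousOn
      fun _ hw => ⟨hw.1, hw.2.1⟩).mul
    (hp.comp (by fun_prop : Continuous fun w : ℝ × ℝ × ℝ × ℝ => (w.2.2.1, w.2.2.2)).continuousOn
      fun _ hw => ⟨hw.2.2.1, hw.2.2.2⟩)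

lemma continuousOn_cklIntegrand (hp : ContinuousOn (uncurry p) (I ×ˢ I))
    (hq : ContinuousOn (uncurry q) (I ×ˢ I)) (hq_pos : ∀ x ∈ I, ∀ y ∈ I, 0 < q x y) :
    ContinuousOn (cklIntegrand p q) unitBox4 := by
  have hQ := continuousOn_pairProd hq
  have hQ_swap : ContinuousOn (fun w => pairProd q (swapY w)) unitBox4 :=
    hQ.comp continuous_swapY.continuousOn mapsTo_swapY_unitBox4
  have hpos : ∀ w ∈ unitBox4, 0 < pairProd q w + pairProd q (swapY w) := fun w hw =>
    add_pos (pairProd_pos hq_pos hw) (pairProd_pos hq_pos (mapsTo_swapY_unitBox4 hw))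
  have hlog := (hQ.div (hQ.add hQ_swap) fun w hw => (hpos w hw).ne').log fun w hw =>
    (div_pos (pairProd_pos hq_pos hw) (hpos w hw)).ne'
  exact hlog.neg.mul (continuousOn_pairProd hp)

noncomputable def scoreGap (p q : ℝ → ℝ → ℝ) (w : ℝ × ℝ × ℝ × ℝ) : ℝ :=
  binaryCrossEntropy (pairProd p w) (pairProd p (swapY w)) (pairProd q w) (pairProd q (swapY w)) -
    binaryCrossEntropy (pairProd p w) (pairProd p (swapY w)) (pairProd p w) (pairProd p (swapY w))

lemma scoreGap_eq (p q : ℝ → ℝ → ℝ) (w : ℝ × ℝ × ℝ × ℝ) :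
    scoreGap p q w = (cklIntegrand p q w + cklIntegrand p q (swapY w)) -
      (cklIntegrand p p w + cklIntegrand p p (swapY w)) := by
  rw [scoreGap, cklIntegrand_add_comp_swapY, cklIntegrand_add_comp_swapY]

lemma scoreGap_nonneg (hp_pos : ∀ x ∈ I, ∀ y ∈ I, 0 < p x y)
    (hq_pos : ∀ x ∈ I, ∀ y ∈ I, 0 < q x y) {w : ℝ × ℝ × ℝ × ℝ} (hw : w ∈ unitBox4) :
    0 ≤ scoreGap p q w :=
  sub_nonneg.2 <| binaryCrossEntropy_self_le (pairProd_pos hp_pos hw)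
    (pairProd_pos hp_pos (mapsTo_swapY_unitBox4 hw)) (pairProd_pos hq_pos hw)
    (pairProd_pos hq_pos (mapsTo_swapY_unitBox4 hw))

lemma continuousOn_scoreGap (hp : ContinuousOn (uncurry p) (I ×ˢ I))
    (hq : ContinuousOn (uncurry q) (I ×ˢ I)) (hp_pos : ∀ x ∈ I, ∀ y ∈ I, 0 < p x y)
    (hq_pos : ∀ x ∈ I, ∀ y ∈ I, 0 < q x y) : ContinuousOn (scoreGap p q) unitBox4 := by
  have hpq := continuousOn_cklIntegrand hp hq hq_pos
  have hpp := continuousOn_cklIntegrand hp hp hp_pos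
  rw [funext (scoreGap_eq p q)]
  exact (hpq.add (hpq.comp continuous_swapY.continuousOn mapsTo_swapY_unitBox4)).sub
    (hpp.add (hpp.comp continuous_swapY.continuousOn mapsTo_swapY_unitBox4))

lemma setIntegral_scoreGap (hpq : IntegrableOn (cklIntegrand p q) unitBox4)
    (hpp : IntegrableOn (cklIntegrand p p) unitBox4) :
    ∫ w in unitBox4, scoreGap p q w = 2 * (expCondKLScore p q - expCondKLScore p p) := by
  have hsum : ∀ r : ℝ → ℝ → ℝ, IntegrableOn (cklIntegrand p r) unitBox4 →
      IntegrableOn (fun w => cklIntegrand p r w + cklIntegrand p r (swapY w)) unitBox4 :=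
    fun _ hr => hr.add (IntegrableOn.comp_swapY hr)
  simp_rw [scoreGap_eq]
  rw [integral_sub (hsum q hpq) (hsum p hpp), setIntegral_add_comp_swapY hpq,
    setIntegral_add_comp_swapY hpp, expCondKLScore, expCondKLScore]
  ring

theorem oddsRatio_eq_of_expCondKLScore_eq (hp : ContinuousOn (uncurry p) (I ×ˢ I))
    (hq : ContinuousOn (uncurry q) (I ×ˢ I)) (hp_pos : ∀ x ∈ I, ∀ y ∈ I, 0 < p x y)
    (hq_pos : ∀ x ∈ I, ∀ y ∈ I, 0 < q x y) (h : expCondKLScore p q = expCondKLScore p p)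
    {w : ℝ × ℝ × ℝ × ℝ} (hw : w ∈ unitBox4) :
    pairProd p w * pairProd q (swapY w) = pairProd p (swapY w) * pairProd q w := by
  have hgap := continuousOn_scoreGap hp hq hp_pos hq_pos
  have hgap_int : ∫ w in unitBox4, scoreGap p q w = 0 := by
    rw [setIntegral_scoreGap
      ((continuousOn_cklIntegrand hp hq hq_pos).integrableOn_compact isCompact_unitBox4)
      ((continuousOn_cklIntegrand hp hp hp_pos).integrableOn_compact isCompact_unitBox4),
      h, sub_self, mul_zero]
  have hgap_zero : scoreGap p q w = 0 :=
    eqOn_zero_of_setIntegral_eq_zero measurableSet_unitBox4 unitBox4_subset_closure_interior hgap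
      (fun _ hw => scoreGap_nonneg hp_pos hq_pos hw)
      (hgap.integrableOn_compact isCompact_unitBox4) hgap_int hw
  have hsw := mapsTo_swapY_unitBox4 hw
  exact mul_eq_mul_of_binaryCrossEntropy_eq (pairProd_pos hp_pos hw) (pairProd_pos hp_pos hsw)
    (pairProd_pos hq_pos hw) (pairProd_pos hq_pos hsw) (sub_eq_zero.1 hgap_zero)

lemma setIntegral_sub_mul_add_eq_zero (hp : ContinuousOn (uncurry p) (I ×ˢ I))
    (hq : ContinuousOn (uncurry q) (I ×ˢ I))
    (hrow : ∀ x ∈ I, ∫ y in I, p x y = ∫ y in I, q x y)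
    (hcol : ∀ y ∈ I, ∫ x in I, p x y = ∫ x in I, q x y)
    {F G : ℝ → ℝ} (hF : ContinuousOn F I) (hG : ContinuousOn G I) :
    ∫ z in I ×ˢ I, (p z.1 z.2 - q z.1 z.2) * (F z.1 + G z.2) = 0 := by
  set μ : Measure ℝ := volume.restrict I
  have hrestr : (volume : Measure (ℝ × ℝ)).restrict (I ×ˢ I) = μ.prod μ := by
    rw [Measure.volume_eq_prod, Measure.prod_restrict]
  have hint {f : ℝ × ℝ → ℝ} (hf : ContinuousOn f (I ×ˢ I)) : Integrable f (μ.prod μ) := by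
    rw [← hrestr]
    exact hf.integrableOn_compact (isCompact_Icc.prod isCompact_Icc)
  have hp_int := hint hp
  have hq_int := hint hq
  rw [hrestr]
  refine integral_mul_add_eq_zero (r := fun x y => p x y - q x y)
    (hint ((hp.sub hq).mul (hF.comp continuous_fst.continuousOn fun _ hz => hz.1)))
    (hint ((hp.sub hq).mul (hG.comp continuous_snd.continuousOn fun _ hz => hz.2))) ?_ ?_
  · filter_upwards [hp_int.prod_right_ae, hq_int.prod_right_ae, ae_restrict_mem measurableSet_Icc]
      with x hpx hqx hx
    exact (integral_sub hpx hqx).trans (sub_eq_zero.2 (hrow x hx))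
  · filter_upwards [hp_int.prod_left_ae, hq_int.prod_left_ae, ae_restrict_mem measurableSet_Icc]
      with y hpy hqy hy
    exact (integral_sub hpy hqy).trans (sub_eq_zero.2 (hcol y hy))

theorem eq_of_oddsRatio_eq (hp : ContinuousOn (uncurry p) (I ×ˢ I))
    (hq : ContinuousOn (uncurry q) (I ×ˢ I)) (hp_pos : ∀ x ∈ I, ∀ y ∈ I, 0 < p x y)
    (hq_pos : ∀ x ∈ I, ∀ y ∈ I, 0 < q x y)
    (hrow : ∀ x ∈ I, ∫ y in I, p x y = ∫ y in I, q x y)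
    (hcol : ∀ y ∈ I, ∫ x in I, p x y = ∫ x in I, q x y)
    (hodds : ∀ x ∈ I, ∀ y ∈ I, p x y * p 0 0 * (q x 0 * q 0 y) = p x 0 * p 0 y * (q x y * q 0 0))
    {x y : ℝ} (hx : x ∈ I) (hy : y ∈ I) : p x y = q x y := by
  set L : ℝ → ℝ → ℝ := fun x y => log (p x y) - log (q x y)
  have hL : ContinuousOn (uncurry L) (I ×ˢ I) :=
    (hp.log fun z hz => (hp_pos _ hz.1 _ hz.2).ne').sub
      (hq.log fun z hz => (hq_pos _ hz.1 _ hz.2).ne')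
  have hsep : EqOn (fun z : ℝ × ℝ => (p z.1 z.2 - q z.1 z.2) * L z.1 z.2)
      (fun z => (p z.1 z.2 - q z.1 z.2) * (L z.1 0 + (L 0 z.2 - L 0 0))) (I ×ˢ I) := by
    rintro ⟨x, y⟩ ⟨hx, hy⟩
    have h0 : (0 : ℝ) ∈ I := zero_mem
    have hlog := congrArg log (hodds x hx y hy)
    rw [log_mul_mul_mul (hp_pos _ hx _ hy) (hp_pos _ h0 _ h0) (hq_pos _ hx _ h0) (hq_pos _ h0 _ hy),
      log_mul_mul_mul (hp_pos _ hx _ h0) (hp_pos _ h0 _ hy) (hq_pos _ hx _ hy)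
        (hq_pos _ h0 _ h0)] at hlog
    simp only [L]
    congr 1
    linarith
  have hD := (hp.sub hq).mul hL
  have hsq : MeasurableSet (I ×ˢ I) := measurableSet_Icc.prod measurableSet_Icc
  have hD_int : ∫ z in I ×ˢ I, (p z.1 z.2 - q z.1 z.2) * L z.1 z.2 = 0 := by
    rw [setIntegral_congr_fun hsq hsep]
    exact setIntegral_sub_mul_add_eq_zero hp hq hrow hcol
      (hL.comp (by fun_prop : Continuous fun x : ℝ => (x, (0 : ℝ))).continuousOn
        fun _ hx => ⟨hx, zero_mem⟩)
      ((hL.comp (by fun_prop : Continuous fun y : ℝ => ((0 : ℝ), y)).continuousOn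
        fun _ hy => ⟨zero_mem, hy⟩).sub continuousOn_const)
  have hD_zero := eqOn_zero_of_setIntegral_eq_zero hsq
    (prod_subset_closure_interior unitInterval_subset_closure_interior
      unitInterval_subset_closure_interior) hD
    (fun z hz => sub_mul_log_sub_log_nonneg (hp_pos _ hz.1 _ hz.2) (hq_pos _ hz.1 _ hz.2))
    (hD.integrableOn_compact (isCompact_Icc.prod isCompact_Icc)) hD_int (mk_mem_prod hx hy)
  exact eq_of_sub_mul_log_sub_log_eq_zero (hp_pos _ hx _ hy) (hq_pos _ hx _ hy) hD_zero

end Model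

lemma continuousOn_uncurry_of_eqOn_exp {α β : Type*} [TopologicalSpace α] [TopologicalSpace β]
    {s : Set α} {t : Set β} {k : ℕ} {h : Fin k → α → β → ℝ}
    (hh : ∀ i, ContinuousOn (uncurry (h i)) (s ×ˢ t)) (θ : Fin k → ℝ) {a : α → ℝ} {b : β → ℝ}
    (ha : ContinuousOn a s) (hb : ContinuousOn b t) {p : α → β → ℝ}
    (hp : ∀ x ∈ s, ∀ y ∈ t, p x y = exp ((∑ i, θ i * h i x y) + a x + b y)) :
    ContinuousOn (uncurry p) (s ×ˢ t) := by
  refine ContinuousOn.congr ?_ fun z hz => hp z.1 hz.1 z.2 hz.2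
  refine continuous_exp.comp_continuousOn (((continuousOn_finsetSum _ fun i _ => ?_).add
    (ha.comp continuous_fst.continuousOn fun _ hz => hz.1)).add
    (hb.comp continuous_snd.continuousOn fun _ hz => hz.2))
  exact continuousOn_const.mul (hh i)

theorem condKLScore_strictly_proper_min_info_general
    (k : ℕ) (h : Fin k → ℝ → ℝ → ℝ)
    (hh_cont : ∀ i, ContinuousOn (fun z : ℝ × ℝ => h i z.1 z.2) (Icc (0:ℝ) 1 ×ˢ Icc (0:ℝ) 1))
    (θ θ' : Fin k → ℝ) (ap bp aq bq : ℝ → ℝ)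
    (hap : ContinuousOn ap (Icc (0:ℝ) 1)) (hbp : ContinuousOn bp (Icc (0:ℝ) 1))
    (haq : ContinuousOn aq (Icc (0:ℝ) 1)) (hbq : ContinuousOn bq (Icc (0:ℝ) 1))
    (p q : ℝ → ℝ → ℝ)
    (hp_form : ∀ x ∈ Icc (0:ℝ) 1, ∀ y ∈ Icc (0:ℝ) 1,
      p x y = Real.exp ((∑ i, θ i * h i x y) + ap x + bp y))
    (hq_form : ∀ x ∈ Icc (0:ℝ) 1, ∀ y ∈ Icc (0:ℝ) 1,
      q x y = Real.exp ((∑ i, θ' i * h i x y) + aq x + bq y))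
    (hp_marg1 : ∀ x ∈ Icc (0:ℝ) 1, ∫ y in Icc (0:ℝ) 1, p x y = 1)
    (hp_marg2 : ∀ y ∈ Icc (0:ℝ) 1, ∫ x in Icc (0:ℝ) 1, p x y = 1)
    (hq_marg1 : ∀ x ∈ Icc (0:ℝ) 1, ∫ y in Icc (0:ℝ) 1, q x y = 1)
    (hq_marg2 : ∀ y ∈ Icc (0:ℝ) 1, ∫ x in Icc (0:ℝ) 1, q x y = 1)
    (heq : expCondKLScore p q = expCondKLScore p p) :
    ∀ x ∈ Icc (0:ℝ) 1, ∀ y ∈ Icc (0:ℝ) 1, p x y = q x y := by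
  have hp := continuousOn_uncurry_of_eqOn_exp hh_cont θ hap hbp hp_form
  have hq := continuousOn_uncurry_of_eqOn_exp hh_cont θ' haq hbq hq_form
  have hp_pos : ∀ x ∈ I, ∀ y ∈ I, 0 < p x y := fun x hx y hy => hp_form x hx y hy ▸ exp_pos _
  have hq_pos : ∀ x ∈ I, ∀ y ∈ I, 0 < q x y := fun x hx y hy => hq_form x hx y hy ▸ exp_pos _
  intro x hx y hy
  refine eq_of_oddsRatio_eq hp hq hp_pos hq_pos
    (fun x hx => (hp_marg1 x hx).trans (hq_marg1 x hx).symm)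
    (fun y hy => (hp_marg2 y hy).trans (hq_marg2 y hy).symm) (fun x hx y hy => ?_) hx hy
  exact oddsRatio_eq_of_expCondKLScore_eq hp hq hp_pos hq_pos heq (w := (x, y, 0, 0))
    ⟨hx, hy, zero_mem, zero_mem⟩

/-- The conditional KL score is strictly proper relative to the minimum
information copula model: if `p` and `q` are continuous copula densities of
minimum-information form built from continuous feature functions `h₁,…,h_k`,
and `S(p,q) = S(p,p)` (both finite), then `p = q` on `[0,1]²`. -/
theorem condKLScore_strictly_proper_min_info
    (k : ℕ) (h : Fin k → ℝ → ℝ → ℝ)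
    (hh_cont : ∀ i, ContinuousOn (fun z : ℝ × ℝ => h i z.1 z.2) (Icc (0:ℝ) 1 ×ˢ Icc (0:ℝ) 1))
    (θ θ' : Fin k → ℝ) (ap bp aq bq : ℝ → ℝ)
    (hap : ContinuousOn ap (Icc (0:ℝ) 1)) (hbp : ContinuousOn bp (Icc (0:ℝ) 1))
    (haq : ContinuousOn aq (Icc (0:ℝ) 1)) (hbq : ContinuousOn bq (Icc (0:ℝ) 1))
    (p q : ℝ → ℝ → ℝ)
    (hp_form : ∀ x ∈ Icc (0:ℝ) 1, ∀ y ∈ Icc (0:ℝ) 1,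
      p x y = Real.exp ((∑ i, θ i * h i x y) + ap x + bp y))
    (hq_form : ∀ x ∈ Icc (0:ℝ) 1, ∀ y ∈ Icc (0:ℝ) 1,
      q x y = Real.exp ((∑ i, θ' i * h i x y) + aq x + bq y))
    (hp_marg1 : ∀ x ∈ Icc (0:ℝ) 1, ∫ y in Icc (0:ℝ) 1, p x y = 1)
    (hp_marg2 : ∀ y ∈ Icc (0:ℝ) 1, ∫ x in Icc (0:ℝ) 1, p x y = 1)
    (hq_marg1 : ∀ x ∈ Icc (0:ℝ) 1, ∫ y in Icc (0:ℝ) 1, q x y = 1)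
    (hq_marg2 : ∀ y ∈ Icc (0:ℝ) 1, ∫ x in Icc (0:ℝ) 1, q x y = 1)
    (hfin_pq : IntegrableOn (cklIntegrand p q) unitBox4)
    (hfin_pp : IntegrableOn (cklIntegrand p p) unitBox4)
    (heq : expCondKLScore p q = expCondKLScore p p) :
    ∀ x ∈ Icc (0:ℝ) 1, ∀ y ∈ Icc (0:ℝ) 1, p x y = q x y :=
  condKLScore_strictly_proper_min_info_general k h hh_cont θ θ' ap bp aq bq hap hbp haq hbq p q
    hp_form hq_form hp_marg1 hp_marg2 hq_marg1 hq_marg2 heq
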